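/- arXiv:2203.06336 — 3 statements merged into one kernel-verified Lean document; each statement's English description precedes it below -/
import Mathlib

section
/- Let s be a prime power, let a, c ∈ GF(s)^{n1}, and let b, d ∈ GF(s)^{n1·n2} be partitioned into consecutive blocks b_1,…,b_{n1} and d_1,…,d_{n1} of length n2. Suppose d = 0 (the zero vector). If one of the following holds: (1) every block b_i is balanced and c is balanced; (2) b = 0 and (a, c) is an OA(n1, 2, s, 2); then the (n1·n2)×2 matrix (a⊛b, c⊛d) is an OA(n1·n2, 2, s, 2). -/
open Finset

/-- `M` (rows indexed by `R`, columns by `C`, entries in the finite field `F` with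
`s = Fintype.card F` elements) is an orthogonal array of strength `t`: for any choice of `t`
distinct columns and any `t`-tuple of symbols, the number of rows showing that tuple, times
`s ^ t`, equals the number of rows (i.e. each tuple appears exactly `(card R) / s ^ t` times). -/
def IsOA {R C F : Type*} [Fintype R] [Fintype F] [DecidableEq F]
    (M : R → C → F) (t : ℕ) : Prop :=
  ∀ cols : Fin t → C, Function.Injective cols → ∀ v : Fin t → F,
    (Finset.univ.filter fun r : R => ∀ j, M r (cols j) = v j).card
      * Fintype.card F ^ t = Fintype.card R

/-- A vector over `F` is balanced if every symbol of `F` occurs equally often among its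
entries. -/
def IsBalanced {R F : Type*} [Fintype R] [Fintype F] [DecidableEq F] (v : R → F) : Prop :=
  ∀ x : F, (Finset.univ.filter fun r : R => v r = x).card * Fintype.card F = Fintype.card R

/-- `M` is a difference scheme: for any two distinct columns, the vector of entrywise
differences contains every element of `F` equally often. -/
def IsDiffScheme {R C F : Type*} [Fintype R] [Field F] [Fintype F] [DecidableEq F]
    (M : R → C → F) : Prop :=
  ∀ j j' : C, j ≠ j' → ∀ x : F,
    (Finset.univ.filter fun r : R => M r j - M r j' = x).card * Fintype.card F
      = Fintype.card R

/-! Since `d = 0`, the second column `c ⊛ d` is constant on each block. Counting the rows that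
show a pair `(x, y)` block by block: in case (1) every block `a i + b i` is balanced, so block `i`
contains `n2 / s` such rows when `c i = y` and none otherwise, and `c` is balanced; in case (2)
the array is `(a, c)` with every row repeated `n2` times. -/

section

variable {F : Type*} [Fintype F] [DecidableEq F]

theorem isOA_two_iff {R : Type*} [Fintype R] (f g : R → F) :
    IsOA (fun r => ![f r, g r]) 2 ↔
      ∀ x y, #{r | f r = x ∧ g r = y} * Fintype.card F ^ 2 = Fintype.card R := by
  constructor
  · intro h x y
    simpa [Fin.forall_fin_two] using h id Function.injective_id ![x, y]
  · intro h cols hcols v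
    have hne : cols 0 ≠ cols 1 := hcols.ne (by decide)
    simp only [Fin.forall_fin_two]
    generalize cols 0 = i, cols 1 = j at hne
    fin_cases i <;> fin_cases j
    · exact absurd rfl hne
    · simpa using h (v 0) (v 1)
    · simpa [and_comm] using h (v 1) (v 0)
    · exact absurd rfl hne

theorem IsBalanced.const_add {R : Type*} [Fintype R] [AddGroup F] {v : R → F}
    (hv : IsBalanced v) (a : F) : IsBalanced fun r => a + v r := by
  intro x
  simpa [← eq_neg_add_iff_add_eq] using hv (-a + x)

theorem IsOA.comp_fst {ι κ C : Type*} [Fintype ι] [Fintype κ] {M : ι → C → F} {t : ℕ}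
    (hM : IsOA M t) : IsOA (fun p : ι × κ => M p.1) t := by
  intro cols hcols v
  rw [← univ_product_univ, filter_product_left fun i => ∀ j, M i (cols j) = v j,
    card_product, mul_right_comm, hM cols hcols v, card_univ, Fintype.card_prod]

theorem card_filter_prod {ι κ : Type*} [Fintype ι] [Fintype κ] (p : ι × κ → Prop)
    [DecidablePred p] : #{q | p q} = ∑ i, #{j | p (i, j)} := by
  simp only [card_filter, Fintype.sum_prod_type]

theorem isOA_two_of_isBalanced_fiberwise {ι κ : Type*} [Fintype ι] [Fintype κ]
    (f : ι × κ → F) (c : ι → F) (hf : ∀ i, IsBalanced fun j => f (i, j))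
    (hc : IsBalanced c) : IsOA (fun p : ι × κ => ![f p, c p.1]) 2 := by
  refine (isOA_two_iff _ _).2 fun x y => ?_
  have hfiber : ∀ i, #{j | f (i, j) = x ∧ c i = y} * Fintype.card F
      = if c i = y then Fintype.card κ else 0 := by
    intro i
    split_ifs with h <;> simp [h, hf i x]
  calc #{p | f p = x ∧ c p.1 = y} * Fintype.card F ^ 2
      = (∑ i, #{j | f (i, j) = x ∧ c i = y} * Fintype.card F) * Fintype.card F := by
        rw [card_filter_prod, sq, ← mul_assoc, sum_mul]
    _ = #{i | c i = y} * Fintype.card F * Fintype.card κ := by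
        simp_rw [hfiber]
        rw [sum_ite, sum_const_zero, add_zero, sum_const, smul_eq_mul, mul_right_comm]
    _ = Fintype.card (ι × κ) := by rw [hc y, Fintype.card_prod]

end

/-- Lemma 2(iii). -/
theorem statement2 {F : Type} [Field F] [Fintype F] [DecidableEq F]
    {n1 n2 : ℕ}
    (a c : Fin n1 → F) (b d : Fin n1 → Fin n2 → F)
    (hd : ∀ i j, d i j = 0)
    (hcond :
      ((∀ i : Fin n1, IsBalanced (b i)) ∧ IsBalanced c)
      ∨ ((∀ i j, b i j = 0) ∧ IsOA (fun i : Fin n1 => ![a i, c i]) 2)) :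
    IsOA (fun p : Fin n1 × Fin n2 => ![a p.1 + b p.1 p.2, c p.1 + d p.1 p.2]) 2 := by
  simp only [hd, add_zero]
  rcases hcond with ⟨hb, hc⟩ | ⟨hb, hac⟩
  · exact isOA_two_of_isBalanced_fiberwise (fun p => a p.1 + b p.1 p.2) c
      (fun i => (hb i).const_add (a i)) hc
  · simpa only [hb, add_zero] using hac.comp_fst (κ := Fin n2)
end

section
/- Let s be a prime power, let a, c, e ∈ GF(s)^{n1}, and let b, d, f ∈ GF(s)^{n1·n2} be partitioned into consecutive blocks of length n2: b_1,…,b_{n1}; d_1,…,d_{n1}; f_1,…,f_{n1}. If for every i = 1,…,n1 the n2×3 matrix (b_i, d_i, f_i) is an OA(n2, 3, s, 3), then the (n1·n2)×3 matrix (a⊛b, c⊛d, e⊛f) is an OA(n1·n2, 3, s, 3). -/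
open Finset

/-! Block `i` of `(a ⊛ b, c ⊛ d, e ⊛ f)` is the orthogonal array `(bᵢ, dᵢ, fᵢ)` with the constant
row `(aᵢ, cᵢ, eᵢ)` added to every row. Such a translation only relabels the symbol tuples, so it
keeps the strength, and stacking arrays of equal strength adds up their tuple counts. -/

section OrthogonalArray

variable {R C F : Type*} [Fintype R] [Fintype F] [DecidableEq F] {t : ℕ}

theorem IsOA.const_add [AddGroup F] {M : R → C → F} (hM : IsOA M t) (u : C → F) :
    IsOA (fun r => u + M r) t := by
  intro cols hcols v
  rw [← hM cols hcols (fun j => -u (cols j) + v j)]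
  congr 2
  ext r
  simp only [mem_filter, mem_univ, true_and, Pi.add_apply, eq_neg_add_iff_add_eq]

theorem IsOA.prod {ι : Type*} [Fintype ι] {M : ι → R → C → F} (hM : ∀ i, IsOA (M i) t) :
    IsOA (fun p : ι × R => M p.1 p.2) t := by
  intro cols hcols v
  calc (univ.filter fun p : ι × R => ∀ j, M p.1 p.2 (cols j) = v j).card * Fintype.card F ^ t
      = (∑ i, (univ.filter fun r => ∀ j, M i r (cols j) = v j).card) * Fintype.card F ^ t := by
        simp only [card_filter, Fintype.sum_prod_type]
    _ = ∑ _ : ι, Fintype.card R := by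
        rw [sum_mul]
        exact sum_congr rfl fun i _ => hM i cols hcols v
    _ = Fintype.card (ι × R) := by simp [Fintype.card_prod]

end OrthogonalArray

/-- Lemma 3(i): if every block triple `(bᵢ, dᵢ, fᵢ)` is an `OA(n₂, 3, s, 3)`,
then `(a ⊛ b, c ⊛ d, e ⊛ f)` is an `OA(n₁n₂, 3, s, 3)`. -/
theorem statement3 {F : Type} [Field F] [Fintype F] [DecidableEq F]
    {n1 n2 : ℕ}
    (a c e : Fin n1 → F) (b d f : Fin n1 → Fin n2 → F)
    (hbdf : ∀ i : Fin n1, IsOA (fun j : Fin n2 => ![b i j, d i j, f i j]) 3) :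
    IsOA (fun p : Fin n1 × Fin n2 =>
      ![a p.1 + b p.1 p.2, c p.1 + d p.1 p.2, e p.1 + f p.1 p.2]) 3 := by
  have hshifted : ∀ i, IsOA (fun j => ![a i, c i, e i] + ![b i j, d i j, f i j]) 3 :=
    fun i => (hbdf i).const_add _
  simpa only [Matrix.cons_add_cons, Matrix.empty_add_empty] using IsOA.prod hshifted
end

section
/- Let s be a prime power. Let A be the s×1 column vector containing each element of GF(s) exactly once (an OA(s, 1, s, 1)), let B_i be an OA(n2, m2, s, 3) for i = 1,…,s, and let F = [D_1, …, D_s] be the array E of the construction with its last column removed. Then F is an OA(n2·s, s·m2, s, 2), the number of 3-element subsets of columns of F that fail to be 3-orthogonal is exactly m2·C(s, 3), and consequently p(F) = 1 − m2·C(s,3)/C(s·m2, 3) = 1 − (s−1)(s−2)/((s·m2 − 1)(s·m2 − 2)). -/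
open Finset

/-- Three (distinct) columns of `M` are 3-orthogonal if they form an `OA(card R, 3, s, 3)`;
a 3-element set `T` of column indices is 3-orthogonal if this holds for its three columns. -/
def TripleOrth {R C F : Type*} [Fintype R] [Fintype F] [DecidableEq F]
    (M : R → C → F) (T : Finset C) : Prop :=
  ∀ c1 c2 c3 : C,
    (c1 ∈ T ∧ c2 ∈ T ∧ c3 ∈ T ∧ c1 ≠ c2 ∧ c1 ≠ c3 ∧ c2 ≠ c3) →
    ∀ v : Fin 3 → F,
      (Finset.univ.filter fun r : R => M r c1 = v 0 ∧ M r c2 = v 1 ∧ M r c3 = v 2).card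
        * Fintype.card F ^ 3 = Fintype.card R

instance {R C F : Type*} [Fintype R] [Fintype C] [DecidableEq C] [Fintype F] [DecidableEq F]
    (M : R → C → F) (T : Finset C) : Decidable (TripleOrth M T) := by
  unfold TripleOrth; exact inferInstance

/-- The array `𝐅 = [D₁, …, D_s]` of the construction with `A` the `s × 1` column containing
each element of `F = GF(s)` exactly once (so `m₁ = 1`, rows indexed by `F × Fin n₂`, and the
last column `D_{s+1} = A` of `E` removed).  Columns `Sum.inl (g, l)` with `g ≠ 0` are the
columns of `D₁, …, D_{s−1}` and columns `Sum.inr l` are those of `D_s = B`. -/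
def FmatA {F : Type} [Field F] {n2 m2 : ℕ} (B : F → Fin n2 → Fin m2 → F) :
    (F × Fin n2) → (({g : F // g ≠ 0} × Fin m2) ⊕ Fin m2) → F
  | p, Sum.inl (g, l) => p.1 + g.1 * B p.1 p.2 l
  | p, Sum.inr l => B p.1 p.2 l

/-! Write `x = B i j l` for the symbol behind row `(i, j)` in block `l`. Column `(g, l)` of
`FmatA B` shows `i + g x` and column `l` shows `x`; each is an invertible affine function of `x`
whose slope in `i` distinguishes the `s` columns of block `l`. Hence two columns of one block
pin down both `i` and `x`, so only the rows of a single `B i` contribute, and any further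
condition lies in another column of that `B i`; columns from pairwise different blocks read
distinct columns of every `B i`. Either way the strength 3 of the `B i` makes every pair, and
every triple meeting at least two blocks, orthogonal. In a triple inside one block the third
symbol is a function of the first two, so the non-orthogonal triples are exactly the
`m₂ · C(s, 3)` triples inside the `m₂` blocks. -/

section OrthogonalArray

variable {R C F : Type*} [Fintype R] [Fintype F] [DecidableEq F] {M : R → C → F}

theorem IsOA.of_succ [Fintype C] [Nonempty F] {t : ℕ} (h : IsOA M (t + 1))
    (ht : t < Fintype.card C) : IsOA M t := by
  intro cols hcols v
  obtain ⟨c, hc⟩ : ∃ c, c ∉ Set.range cols := by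
    by_contra! hsurj
    exact ht.not_ge ((Fintype.card_le_of_surjective _ hsurj).trans_eq (Fintype.card_fin t))
  have hfiber (x : F) : (univ.filter fun r => ∀ j,
      M r ((Fin.cons c cols : Fin (t + 1) → C) j) = (Fin.cons x v : Fin (t + 1) → F) j)
      = univ.filter fun r => M r c = x ∧ ∀ j, M r (cols j) = v j := by
    simp only [Fin.forall_fin_succ, Fin.cons_zero, Fin.cons_succ]
  have hsum := card_eq_sum_card_fiberwise (s := univ.filter fun r => ∀ j, M r (cols j) = v j)
    (t := univ) (f := fun r => M r c) (fun _ _ => mem_univ _)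
  refine Nat.eq_of_mul_eq_mul_right (Fintype.card_pos (α := F)) ?_
  calc _ = ∑ x : F, (univ.filter fun r => ∀ j,
        M r ((Fin.cons c cols : Fin (t + 1) → C) j) = (Fin.cons x v : Fin (t + 1) → F) j).card
        * Fintype.card F ^ (t + 1) := by
        simp only [hfiber, hsum, filter_filter, sum_mul, pow_succ, mul_assoc]
        congr! 3 with x
        exact filter_congr fun r _ => and_comm
    _ = Fintype.card R * Fintype.card F := by
        simp [h _ (Fin.cons_injective_of_injective hc hcols)]
        ring

theorem IsOA.card_filter_eq_one (h : IsOA M 1) (l : C) (b : F) :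
    #(univ.filter fun r => M r l = b) * Fintype.card F = Fintype.card R := by
  simpa [Fin.forall_fin_one] using h ![l] (Function.injective_of_subsingleton _) ![b]

theorem IsOA.card_filter_eq_two (h : IsOA M 2) {l₁ l₂ : C} (h₁₂ : l₁ ≠ l₂) (b₁ b₂ : F) :
    #(univ.filter fun r => M r l₁ = b₁ ∧ M r l₂ = b₂) * Fintype.card F ^ 2
      = Fintype.card R := by
  have hinj : Function.Injective ![l₁, l₂] := by
    intro a b hab
    fin_cases a <;> fin_cases b <;> simp_all [eq_comm]
  simpa [Fin.forall_fin_two] using h _ hinj ![b₁, b₂]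

theorem IsOA.card_filter_eq_three (h : IsOA M 3) {l₁ l₂ l₃ : C} (h₁₂ : l₁ ≠ l₂)
    (h₁₃ : l₁ ≠ l₃) (h₂₃ : l₂ ≠ l₃) (b₁ b₂ b₃ : F) :
    #(univ.filter fun r => M r l₁ = b₁ ∧ M r l₂ = b₂ ∧ M r l₃ = b₃) * Fintype.card F ^ 3
      = Fintype.card R := by
  have hinj : Function.Injective ![l₁, l₂, l₃] := by
    intro a b hab
    fin_cases a <;> fin_cases b <;> simp_all [eq_comm]
  simpa [Fin.forall_fin_succ] using h _ hinj ![b₁, b₂, b₃]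

end OrthogonalArray

theorem card_filter_prod_eq_sum {α β : Type*} [Fintype α] [Fintype β] (P : α × β → Prop)
    [DecidablePred P] :
    #(univ.filter P) = ∑ a, #(univ.filter fun b => P (a, b)) := by
  simp only [card_filter, Fintype.sum_prod_type]

theorem card_filter_prod_mul_eq {α β : Type*} [Fintype α] [Fintype β] (P : α × β → Prop)
    [DecidablePred P] {k N : ℕ} (h : ∀ a, #(univ.filter fun b => P (a, b)) * k = N) :
    #(univ.filter P) * k = Fintype.card α * N := by
  rw [card_filter_prod_eq_sum, sum_mul, sum_congr rfl fun a _ => h a, sum_const, card_univ,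
    smul_eq_mul]

theorem existsUnique_mul_add_eq_mul_add {K : Type*} [Field K] {a a' : K} (h : a ≠ a')
    (b b' : K) : ∃! x, a * x + b = a' * x + b' := by
  refine ⟨(b' - b) / (a - a'), ?_, fun x hx => ?_⟩
  · field_simp [sub_ne_zero.mpr h]
    ring
  · rw [eq_div_iff (sub_ne_zero.mpr h)]
    linear_combination hx

theorem Nat.cast_choose_three (K : Type*) [Field K] [CharZero K] (n : ℕ) :
    (n.choose 3 : K) = n * (n - 1) * (n - 2) / 6 := by
  induction n with
  | zero => simp
  | succ n ih =>
    rw [Nat.choose_succ_succ', Nat.cast_add, ih, Nat.cast_choose_two]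
    push_cast
    ring

theorem card_filter_div_card_eq_one_sub {α : Type*} (s : Finset α) (p : α → Prop)
    [DecidablePred p] (hs : s.Nonempty) :
    (#(s.filter p) : ℚ) / #s = 1 - #(s.filter fun a => ¬ p a) / #s := by
  rw [eq_sub_iff_add_eq, ← add_div, ← Nat.cast_add, card_filter_add_card_filter_not,
    div_self (by exact_mod_cast hs.card_pos.ne')]

theorem cast_mul_choose_three_div_choose_three {q m : ℕ} (h : 3 ≤ q * m) :
    (m * q.choose 3 : ℚ) / ((q * m).choose 3 : ℚ)
      = ((q : ℚ) - 1) * ((q : ℚ) - 2) / (((q : ℚ) * m - 1) * ((q : ℚ) * m - 2)) := by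
  have h' : (3 : ℚ) ≤ q * m := by exact_mod_cast h
  have h₀ : (q : ℚ) * m ≠ 0 := by linarith
  have h₁ : (q : ℚ) * m - 1 ≠ 0 := by linarith
  have h₂ : (q : ℚ) * m - 2 ≠ 0 := by linarith
  rw [Nat.cast_choose_three, Nat.cast_choose_three, Nat.cast_mul,
    div_eq_div_iff (div_ne_zero (mul_ne_zero (mul_ne_zero h₀ h₁) h₂) (by norm_num))
      (mul_ne_zero h₁ h₂)]
  field_simp

namespace FmatA

abbrev Col (F : Type) [Field F] (m2 : ℕ) := ({g : F // g ≠ 0} × Fin m2) ⊕ Fin m2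

variable {F : Type} [Field F] {m2 : ℕ}

def block : Col F m2 → Fin m2
  | Sum.inl (_, l) => l
  | Sum.inr l => l

def slope : Col F m2 → F
  | Sum.inl (g, _) => -g.1⁻¹
  | Sum.inr _ => 0

def offset : Col F m2 → F → F
  | Sum.inl (g, _), v => g.1⁻¹ * v
  | Sum.inr _, v => v

theorem offset_zero (c : Col F m2) : offset c 0 = 0 := by
  rcases c with ⟨_, _⟩ | _ <;> simp [offset]

theorem offset_one_ne_zero (c : Col F m2) : offset c 1 ≠ 0 := by
  rcases c with ⟨⟨g, hg⟩, l⟩ | l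
  · simpa [offset] using hg
  · simp [offset]

theorem slope_ne_of_block_eq {c c' : Col F m2} (hne : c ≠ c') (hl : block c = block c') :
    slope c ≠ slope c' := by
  rcases c with ⟨⟨g, hg⟩, l⟩ | l <;> rcases c' with ⟨⟨g', hg'⟩, l'⟩ | l' <;>
    simp_all [block, slope]

theorem card_block_eq [Fintype F] [DecidableEq F] (l : Fin m2) :
    #(univ.filter fun c : Col F m2 => block c = l) = Fintype.card F := by
  have hfiber : univ.filter (fun c : Col F m2 => block c = l)
      = insert (Sum.inr l) (univ.image fun g => Sum.inl (g, l)) := by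
    ext (⟨g, l'⟩ | l') <;> simp [block, eq_comm]
  have hF : 0 < Fintype.card F := Fintype.card_pos
  rw [hfiber, card_insert_of_notMem (by simp),
    card_image_of_injective _ fun g g' h => by simpa using h, card_univ,
    Fintype.card_subtype_compl, Fintype.card_subtype_eq]
  omega

variable {n2 : ℕ} (B : F → Fin n2 → Fin m2 → F)

theorem FmatA_eq_iff (i : F) (j : Fin n2) (c : Col F m2) (v : F) :
    FmatA B (i, j) c = v ↔ B i j (block c) = slope c * i + offset c v := by
  rcases c with ⟨⟨g, hg⟩, l⟩ | l
  · simp only [FmatA, block, slope, offset]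
    constructor <;> intro h
    · field_simp
      linear_combination h
    · rw [h]
      field_simp
      ring
  · simp [FmatA, block, slope, offset]

variable [Fintype F] [DecidableEq F]

theorem exists_card_filter_pair_eq {c c' : Col F m2} (hne : c ≠ c') (hl : block c = block c')
    (v v' : F) (Q : F × Fin n2 → Prop) [DecidablePred Q] :
    ∃ i₀ x₀, #(univ.filter fun p => FmatA B p c = v ∧ FmatA B p c' = v' ∧ Q p)
      = #(univ.filter fun j => B i₀ j (block c) = x₀ ∧ Q (i₀, j)) := by
  obtain ⟨i₀, hi₀, huniq⟩ := existsUnique_mul_add_eq_mul_add (slope_ne_of_block_eq hne hl)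
    (offset c v) (offset c' v')
  refine ⟨i₀, slope c * i₀ + offset c v, ?_⟩
  rw [card_filter_prod_eq_sum, sum_eq_single i₀ ?_ (by simp)]
  · refine congrArg card (filter_congr fun j _ => ?_)
    rw [FmatA_eq_iff, FmatA_eq_iff, ← hl, ← hi₀]
    constructor
    · rintro ⟨h, -, hQ⟩; exact ⟨h, hQ⟩
    · rintro ⟨h, hQ⟩; exact ⟨h, h, hQ⟩
  · intro i _ hi
    refine card_eq_zero.mpr (filter_eq_empty_iff.mpr fun j _ ⟨h, h', _⟩ => hi ?_)
    rw [FmatA_eq_iff] at h h'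
    exact huniq i (show _ = _ by rw [← h, ← h', hl])

theorem card_filter_pair_mul (hB₁ : ∀ i, IsOA (B i) 1) (hB₂ : ∀ i, IsOA (B i) 2)
    {c c' : Col F m2} (hne : c ≠ c') (v v' : F) :
    #(univ.filter fun p => FmatA B p c = v ∧ FmatA B p c' = v') * Fintype.card F ^ 2
      = Fintype.card F * n2 := by
  by_cases hl : block c = block c'
  · obtain ⟨i, x, h⟩ := exists_card_filter_pair_eq B hne hl v v' fun _ => True
    simp only [and_true] at h
    rw [h, sq, ← mul_assoc, (hB₁ i).card_filter_eq_one, Fintype.card_fin, mul_comm]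
  · refine card_filter_prod_mul_eq _ fun i => ?_
    simp only [FmatA_eq_iff]
    simpa using (hB₂ i).card_filter_eq_two hl _ _

theorem card_filter_triple_mul_of_block_eq (hB₂ : ∀ i, IsOA (B i) 2) {c₁ c₂ c₃ : Col F m2}
    (h₁₂ : c₁ ≠ c₂) (hl₁₂ : block c₁ = block c₂) (hl₁₃ : block c₁ ≠ block c₃) (v₁ v₂ v₃ : F) :
    #(univ.filter fun p => FmatA B p c₁ = v₁ ∧ FmatA B p c₂ = v₂ ∧ FmatA B p c₃ = v₃)
      * Fintype.card F ^ 3 = Fintype.card F * n2 := by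
  obtain ⟨i, x, h⟩ := exists_card_filter_pair_eq B h₁₂ hl₁₂ v₁ v₂ fun p => FmatA B p c₃ = v₃
  rw [h, pow_succ', mul_left_comm]
  congr 1
  simp only [FmatA_eq_iff]
  simpa using (hB₂ i).card_filter_eq_two hl₁₃ _ _

theorem card_filter_triple_mul_of_block_ne (hB₃ : ∀ i, IsOA (B i) 3) {c₁ c₂ c₃ : Col F m2}
    (hl₁₂ : block c₁ ≠ block c₂) (hl₁₃ : block c₁ ≠ block c₃) (hl₂₃ : block c₂ ≠ block c₃)
    (v₁ v₂ v₃ : F) :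
    #(univ.filter fun p => FmatA B p c₁ = v₁ ∧ FmatA B p c₂ = v₂ ∧ FmatA B p c₃ = v₃)
      * Fintype.card F ^ 3 = Fintype.card F * n2 := by
  refine card_filter_prod_mul_eq _ fun i => ?_
  simp only [FmatA_eq_iff]
  simpa using (hB₃ i).card_filter_eq_three hl₁₂ hl₁₃ hl₂₃ _ _ _

theorem card_filter_triple_mul (hB₂ : ∀ i, IsOA (B i) 2) (hB₃ : ∀ i, IsOA (B i) 3)
    {c₁ c₂ c₃ : Col F m2} (h₁₂ : c₁ ≠ c₂) (h₁₃ : c₁ ≠ c₃) (h₂₃ : c₂ ≠ c₃)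
    (hl : ¬ (block c₁ = block c₂ ∧ block c₁ = block c₃)) (v₁ v₂ v₃ : F) :
    #(univ.filter fun p => FmatA B p c₁ = v₁ ∧ FmatA B p c₂ = v₂ ∧ FmatA B p c₃ = v₃)
      * Fintype.card F ^ 3 = Fintype.card F * n2 := by
  by_cases hl₁₂ : block c₁ = block c₂
  · exact card_filter_triple_mul_of_block_eq B hB₂ h₁₂ hl₁₂ (fun h => hl ⟨hl₁₂, h⟩) v₁ v₂ v₃
  by_cases hl₁₃ : block c₁ = block c₃
  · convert card_filter_triple_mul_of_block_eq B hB₂ h₁₃ hl₁₃ hl₁₂ v₁ v₃ v₂ using 4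
    exact and_congr_right fun _ => and_comm
  by_cases hl₂₃ : block c₂ = block c₃
  · convert card_filter_triple_mul_of_block_eq B hB₂ h₂₃ hl₂₃ (Ne.symm hl₁₂) v₂ v₃ v₁ using 4
    exact and_rotate
  exact card_filter_triple_mul_of_block_ne B hB₃ hl₁₂ hl₁₃ hl₂₃ v₁ v₂ v₃

/-- Symbols `0, 0` in two columns of one block force `i = 0` and `x = 0`, hence symbol `0` in
every column of that block. -/
theorem filter_eq_zero_zero_one_eq_empty {c₁ c₂ c₃ : Col F m2} (h₁₂ : c₁ ≠ c₂)
    (hl₁₂ : block c₁ = block c₂) (hl₁₃ : block c₁ = block c₃) :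
    univ.filter (fun p => FmatA B p c₁ = 0 ∧ FmatA B p c₂ = 0 ∧ FmatA B p c₃ = 1) = ∅ := by
  refine filter_eq_empty_iff.mpr ?_
  rintro ⟨i, j⟩ - ⟨h₁, h₂, h₃⟩
  rw [FmatA_eq_iff, offset_zero, add_zero] at h₁ h₂
  rw [FmatA_eq_iff, ← hl₁₃] at h₃
  have hi : i = 0 := by
    have : (slope c₁ - slope c₂) * i = 0 := by rw [sub_mul, ← h₁, ← h₂, hl₁₂, sub_self]
    exact (mul_eq_zero.mp this).resolve_left (sub_ne_zero.mpr (slope_ne_of_block_eq h₁₂ hl₁₂))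
  rw [hi, mul_zero] at h₁
  rw [hi, h₁, mul_zero, zero_add] at h₃
  exact offset_one_ne_zero c₃ h₃.symm

theorem not_tripleOrth_of_forall_block_eq (hn2 : 0 < n2) {T : Finset (Col F m2)} (hT : #T = 3)
    {l : Fin m2} (hTl : ∀ c ∈ T, block c = l) : ¬ TripleOrth (FmatA B) T := by
  obtain ⟨c₁, c₂, c₃, h₁₂, h₁₃, h₂₃, rfl⟩ := card_eq_three.mp hT
  simp only [mem_insert, mem_singleton, forall_eq_or_imp, forall_eq] at hTl
  intro hOrth
  have h : #(univ.filter fun p => FmatA B p c₁ = 0 ∧ FmatA B p c₂ = 0 ∧ FmatA B p c₃ = 1)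
      * Fintype.card F ^ 3 = Fintype.card (F × Fin n2) :=
    hOrth c₁ c₂ c₃ ⟨by simp, by simp, by simp, h₁₂, h₁₃, h₂₃⟩ ![0, 0, 1]
  rw [filter_eq_zero_zero_one_eq_empty B h₁₂ (hTl.1.trans hTl.2.1.symm)
    (hTl.1.trans hTl.2.2.symm), card_empty, zero_mul, Fintype.card_prod, Fintype.card_fin] at h
  exact (Nat.mul_pos Fintype.card_pos hn2).ne h

theorem tripleOrth_of_forall_not_block_eq (hB₂ : ∀ i, IsOA (B i) 2) (hB₃ : ∀ i, IsOA (B i) 3)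
    {T : Finset (Col F m2)} (hT : #T = 3) (hTl : ∀ l, ¬ ∀ c ∈ T, block c = l) :
    TripleOrth (FmatA B) T := by
  rintro c₁ c₂ c₃ ⟨hc₁, hc₂, hc₃, h₁₂, h₁₃, h₂₃⟩ v
  have hT₁₂₃ : T = {c₁, c₂, c₃} := by
    refine (eq_of_subset_of_card_le (by simp [insert_subset_iff, *]) ?_).symm
    rw [hT, card_eq_three.mpr ⟨c₁, c₂, c₃, h₁₂, h₁₃, h₂₃, rfl⟩]
  rw [Fintype.card_prod, Fintype.card_fin]
  refine card_filter_triple_mul B hB₂ hB₃ h₁₂ h₁₃ h₂₃ (fun ⟨e₂, e₃⟩ => hTl (block c₁) ?_) _ _ _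
  simp [hT₁₂₃, ← e₂, ← e₃]

theorem filter_not_tripleOrth_eq (hn2 : 0 < n2) (hB₂ : ∀ i, IsOA (B i) 2)
    (hB₃ : ∀ i, IsOA (B i) 3) :
    (powersetCard 3 (univ : Finset (Col F m2))).filter (fun T => ¬ TripleOrth (FmatA B) T)
      = univ.biUnion fun l => powersetCard 3 (univ.filter fun c => block c = l) := by
  ext T
  simp only [mem_filter, mem_powersetCard, mem_biUnion, mem_univ, true_and, subset_univ]
  simp only [subset_iff, mem_filter, mem_univ, true_and]
  constructor
  · rintro ⟨hT, hOrth⟩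
    by_contra hTl
    exact hOrth (tripleOrth_of_forall_not_block_eq B hB₂ hB₃ hT fun l hl => hTl ⟨l, hl, hT⟩)
  · rintro ⟨l, hTl, hT⟩
    exact ⟨hT, not_tripleOrth_of_forall_block_eq B hn2 hT hTl⟩

theorem card_filter_not_tripleOrth (hn2 : 0 < n2) (hB₂ : ∀ i, IsOA (B i) 2)
    (hB₃ : ∀ i, IsOA (B i) 3) :
    #((powersetCard 3 (univ : Finset (Col F m2))).filter fun T => ¬ TripleOrth (FmatA B) T)
      = m2 * (Fintype.card F).choose 3 := by
  rw [filter_not_tripleOrth_eq B hn2 hB₂ hB₃, card_biUnion]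
  · simp [card_powersetCard, card_block_eq]
  · intro l _ l' _ hll'
    refine disjoint_left.mpr fun T hT hT' => hll' ?_
    rw [mem_powersetCard] at hT hT'
    obtain ⟨c, hc⟩ := card_pos.mp (by omega : 0 < #T)
    exact (mem_filter.mp (hT.1 hc)).2.symm.trans (mem_filter.mp (hT'.1 hc)).2

theorem isOA_two (hB₁ : ∀ i, IsOA (B i) 1) (hB₂ : ∀ i, IsOA (B i) 2) : IsOA (FmatA B) 2 := by
  intro cols hcols v
  simpa [Fin.forall_fin_two] using
    card_filter_pair_mul B hB₁ hB₂ (hcols.ne (by decide : (0 : Fin 2) ≠ 1)) (v 0) (v 1)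

theorem card_col : Fintype.card (Col F m2) = Fintype.card F * m2 := by
  have hF : 0 < Fintype.card F := Fintype.card_pos
  simp only [Fintype.card_sum, Fintype.card_prod, Fintype.card_fin, Fintype.card_subtype_compl,
    Fintype.card_subtype_eq]
  rw [← Nat.succ_mul, Nat.succ_eq_add_one, Nat.sub_add_cancel hF]

end FmatA

/-- Proposition 3: `𝐅` is an `OA(n₂s, s·m₂, s, 2)`; exactly `m₂·C(s,3)` of
the 3-element sets of columns of `𝐅` fail to be 3-orthogonal; and consequently
`p(𝐅) = 1 − m₂·C(s,3)/C(s·m₂,3) = 1 − (s−1)(s−2)/((s·m₂−1)(s·m₂−2))`. -/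
theorem statement14 {F : Type} [Field F] [Fintype F] [DecidableEq F]
    {n2 m2 : ℕ} (hn2 : 0 < n2) (hm2 : 3 ≤ m2)
    (B : F → Fin n2 → Fin m2 → F) (hB : ∀ i, IsOA (B i) 3) :
    IsOA (FmatA B) 2 ∧
    Fintype.card (({g : F // g ≠ 0} × Fin m2) ⊕ Fin m2) = Fintype.card F * m2 ∧
    ((Finset.powersetCard 3
        (Finset.univ : Finset (({g : F // g ≠ 0} × Fin m2) ⊕ Fin m2))).filter
          fun T => ¬ TripleOrth (FmatA B) T).card
      = m2 * (Fintype.card F).choose 3 ∧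
    (((Finset.powersetCard 3
        (Finset.univ : Finset (({g : F // g ≠ 0} × Fin m2) ⊕ Fin m2))).filter
          fun T => TripleOrth (FmatA B) T).card : ℚ)
        / ((Fintype.card F * m2).choose 3 : ℚ)
      = 1 - (m2 * (Fintype.card F).choose 3 : ℚ) / ((Fintype.card F * m2).choose 3 : ℚ) ∧
    (((Finset.powersetCard 3
        (Finset.univ : Finset (({g : F // g ≠ 0} × Fin m2) ⊕ Fin m2))).filter
          fun T => TripleOrth (FmatA B) T).card : ℚ)
        / ((Fintype.card F * m2).choose 3 : ℚ)
      = 1 - ((Fintype.card F : ℚ) - 1) * ((Fintype.card F : ℚ) - 2)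
          / (((Fintype.card F : ℚ) * m2 - 1) * ((Fintype.card F : ℚ) * m2 - 2)) := by
  have hB₂ : ∀ i, IsOA (B i) 2 := fun i => (hB i).of_succ (by simp; omega)
  have hB₁ : ∀ i, IsOA (B i) 1 := fun i => (hB₂ i).of_succ (by simp; omega)
  have hsize : 3 ≤ Fintype.card F * m2 := hm2.trans (Nat.le_mul_of_pos_left m2 Fintype.card_pos)
  have hbad := FmatA.card_filter_not_tripleOrth B hn2 hB₂ hB
  have hgood := card_filter_div_card_eq_one_sub (powersetCard 3 (univ : Finset (FmatA.Col F m2)))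
    (TripleOrth (FmatA B)) (powersetCard_nonempty.mpr (by rwa [card_univ, FmatA.card_col]))
  rw [card_powersetCard, card_univ, FmatA.card_col, hbad, Nat.cast_mul] at hgood
  refine ⟨FmatA.isOA_two B hB₁ hB₂, FmatA.card_col, hbad, hgood, hgood.trans ?_⟩
  rw [cast_mul_choose_three_div_choose_three hsize]
end
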